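/- (Three observers lemma) Let R > 0. For any three suitably chosen distinct points O₁, O₂, O₃ on the sphere ∂B(0,R) ⊂ ℝⁿ (n ≥ 2), there exists c > 0 such that for every x ∈ B(0,R) and every ξ₀ ∈ ℝⁿ, the three blind cones C_{O₁,ξ₀}(x,c), C_{O₂,ξ₀}(x,c), C_{O₃,ξ₀}(x,c) have empty intersection. -/

import Mathlib

open MeasureTheory RealInnerProductSpace Metric Filter

abbrev V (n : ℕ) := EuclideanSpace ℝ (Fin n)

/-- The blind cone with apex angle `c` at `x` with respect to an observer at `x₀`
moving with velocity `ξ₀`. -/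
def blindCone {n : ℕ} (x₀ ξ₀ x : V n) (c : ℝ) : Set (V n) :=
  {ξ : V n | InnerProductGeometry.angle (x - x₀) (ξ - ξ₀) ∉ Set.Icc c (Real.pi - c)}

/-!
Being in the blind cone of aperture `c` says that the line through `ξ - ξ₀` makes an angle
less than `c` with the line through `x - Oₖ`. Angles between lines satisfy the triangle
inequality, so a common point of two blind cones forces the lines through `x - Oₖ` and
`x - Oₗ` to make an angle less than `2c`, hence `|x - Oₖ| |x - Oₗ| sin ∠ ≤ 8 c R²`. This quantity
dominates the component of the wedge `(x - Oₖ) ∧ (x - Oₗ)` in a coordinate plane containing the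
observers, and those components sum, independently of `x`, to twice the area of the triangle
`O₁ O₂ O₃`. So a common point of all three cones is impossible once `c` is small.
-/

open InnerProductGeometry Real

section Angle

variable {E : Type*} [NormedAddCommGroup E] [InnerProductSpace ℝ E]

lemma angle_notMem_Icc_two_mul {a b v : E} {c : ℝ}
    (ha : angle a v ∉ Set.Icc c (π - c)) (hb : angle b v ∉ Set.Icc c (π - c)) :
    angle a b ∉ Set.Icc (2 * c) (π - 2 * c) := by
  have h₁ := angle_le_angle_add_angle a v b
  have h₂ := angle_le_angle_add_angle a v (-b)
  have h₃ := angle_le_angle_add_angle a (-v) b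
  have h₄ := angle_le_angle_add_angle a (-v) (-b)
  simp only [angle_neg_right, angle_neg_left, angle_comm v b] at h₁ h₂ h₃ h₄
  simp only [Set.mem_Icc, not_and_or, not_le] at *
  rcases ha with ha | ha <;> rcases hb with hb | hb
  · left; linarith
  · right; linarith
  · right; linarith
  · left; linarith

lemma sin_angle_lt_of_notMem_Icc {a b : E} {c : ℝ} (h : angle a b ∉ Set.Icc c (π - c)) :
    sin (angle a b) < c := by
  simp only [Set.mem_Icc, not_and_or, not_le] at h
  rcases h with h | h
  · exact (sin_le (angle_nonneg a b)).trans_lt h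
  · rw [← sin_pi_sub]
    exact (sin_le (by linarith [angle_le_pi a b])).trans_lt (by linarith)

end Angle

lemma EuclideanSpace.sq_mul_sub_mul_le {ι : Type*} [Fintype ι] (a b : EuclideanSpace ℝ ι)
    (i j : ι) : (a i * b j - a j * b i) ^ 2 ≤ ⟪a, a⟫ * ⟪b, b⟫ - ⟪a, b⟫ * ⟪a, b⟫ := by
  classical
  have lagrange : ∑ k, ∑ l, (a k * b l - a l * b k) ^ 2 =
      2 * (⟪a, a⟫ * ⟪b, b⟫ - ⟪a, b⟫ * ⟪a, b⟫) := by
    simp only [PiLp.inner_apply, RCLike.inner_apply, conj_trivial, Finset.sum_mul_sum]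
    calc ∑ k, ∑ l, (a k * b l - a l * b k) ^ 2
        = ∑ k, ∑ l, (a k * a k * (b l * b l)) + ∑ k, ∑ l, (a l * a l * (b k * b k))
          - 2 * ∑ k, ∑ l, (b k * a k * (b l * a l)) := by
          simp only [Finset.mul_sum, ← Finset.sum_add_distrib, ← Finset.sum_sub_distrib]
          exact Finset.sum_congr rfl fun _ _ => Finset.sum_congr rfl fun _ _ => by ring
      _ = _ := by rw [Finset.sum_comm (f := fun k l => a l * a l * (b k * b k))]; ring
  obtain rfl | hij := eq_or_ne i j
  · rw [sub_self, sq, zero_mul, sub_nonneg]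
    exact real_inner_mul_inner_self_le a b
  have hpair : (a i * b j - a j * b i) ^ 2 + (a j * b i - a i * b j) ^ 2 ≤
      ∑ p : ι × ι, (a p.1 * b p.2 - a p.2 * b p.1) ^ 2 := by
    rw [← Finset.sum_pair (f := fun p : ι × ι => (a p.1 * b p.2 - a p.2 * b p.1) ^ 2)
      (by simp [hij] : (i, j) ≠ (j, i))]
    exact Finset.sum_le_univ_sum_of_nonneg fun _ => sq_nonneg _
  rw [Fintype.sum_prod_type, lagrange] at hpair
  nlinarith

lemma EuclideanSpace.abs_mul_sub_mul_le_sin_angle_mul {ι : Type*} [Fintype ι]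
    (a b : EuclideanSpace ℝ ι) (i j : ι) :
    |a i * b j - a j * b i| ≤ sin (angle a b) * (‖a‖ * ‖b‖) := by
  rw [sin_angle_mul_norm_mul_norm]
  exact Real.abs_le_sqrt (EuclideanSpace.sq_mul_sub_mul_le a b i j)

lemma abs_mul_sub_mul_le_of_mem_blindCone {n : ℕ} {P Q ξ₀ x ξ : V n} {R c : ℝ}
    (hx : ‖x‖ ≤ R) (hP : ‖P‖ = R) (hQ : ‖Q‖ = R)
    (hξP : ξ ∈ blindCone P ξ₀ x c) (hξQ : ξ ∈ blindCone Q ξ₀ x c) (i j : Fin n) :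
    |(x - P) i * (x - Q) j - (x - P) j * (x - Q) i| ≤ 8 * c * R ^ 2 := by
  have hsin := sin_angle_lt_of_notMem_Icc (angle_notMem_Icc_two_mul hξP hξQ)
  have hsin₀ := sin_angle_nonneg (x - P) (x - Q)
  have hxP : ‖x - P‖ ≤ 2 * R := (norm_sub_le x P).trans (by linarith)
  have hxQ : ‖x - Q‖ ≤ 2 * R := (norm_sub_le x Q).trans (by linarith)
  calc _ ≤ sin (angle (x - P) (x - Q)) * (‖x - P‖ * ‖x - Q‖) :=
        EuclideanSpace.abs_mul_sub_mul_le_sin_angle_mul _ _ i j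
    _ ≤ 2 * c * (2 * R * (2 * R)) := by gcongr <;> linarith [norm_nonneg x]
    _ = 8 * c * R ^ 2 := by ring

theorem three_observers (n : ℕ) (hn : 2 ≤ n) (R : ℝ) (hR : 0 < R) :
    ∃ O₁ O₂ O₃ : V n,
      O₁ ∈ Metric.sphere (0 : V n) R ∧ O₂ ∈ Metric.sphere (0 : V n) R ∧
      O₃ ∈ Metric.sphere (0 : V n) R ∧
      O₁ ≠ O₂ ∧ O₁ ≠ O₃ ∧ O₂ ≠ O₃ ∧
      ∃ c : ℝ, 0 < c ∧
        ∀ x ∈ Metric.ball (0 : V n) R, ∀ ξ₀ : V n,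
          blindCone O₁ ξ₀ x c ∩ blindCone O₂ ξ₀ x c ∩ blindCone O₃ ξ₀ x c = ∅ := by
  let i : Fin n := ⟨0, by omega⟩
  let j : Fin n := ⟨1, by omega⟩
  have hij : i ≠ j := by simp [i, j, Fin.ext_iff]
  set O₁ : V n := EuclideanSpace.single i R
  set O₂ : V n := EuclideanSpace.single i (-R)
  set O₃ : V n := EuclideanSpace.single j R
  have hO₁ : ‖O₁‖ = R := by simp [O₁, hR.le]
  have hO₂ : ‖O₂‖ = R := by simp [O₂, hR.le]
  have hO₃ : ‖O₃‖ = R := by simp [O₃, hR.le]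
  refine ⟨O₁, O₂, O₃, by simpa using hO₁, by simpa using hO₂, by simpa using hO₃,
    ne_of_apply_ne (· i) ?_, ne_of_apply_ne (· i) ?_, ne_of_apply_ne (· i) ?_,
    1 / 16, by norm_num, ?_⟩
  · simp [O₁, O₂]; linarith
  · simp [O₁, O₃, hij, hR.ne']
  · simp [O₂, O₃, hij, hR.ne']
  intro x hx ξ₀
  refine Set.eq_empty_of_forall_notMem fun ξ ⟨⟨h₁, h₂⟩, h₃⟩ => ?_
  have hx' : ‖x‖ ≤ R := (mem_ball_zero_iff.1 hx).le
  have e₁₂ := abs_mul_sub_mul_le_of_mem_blindCone hx' hO₁ hO₂ h₁ h₂ i j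
  have e₂₃ := abs_mul_sub_mul_le_of_mem_blindCone hx' hO₂ hO₃ h₂ h₃ i j
  have e₃₁ := abs_mul_sub_mul_le_of_mem_blindCone hx' hO₃ hO₁ h₃ h₁ i j
  simp [O₁, O₂, O₃, hij, hij.symm] at e₁₂ e₂₃ e₃₁
  -- the three planar wedges sum to `-2 R²`
  linarith [(abs_le.1 e₁₂).1, (abs_le.1 e₂₃).1, (abs_le.1 e₃₁).1, sq_pos_of_pos hR]
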